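/- Let α ∈ (1,2) and for each integer n ≥ 0 set a_n = (α+1)^{n/(1-α)} · Γ(α/(α+1)) · Γ(1 + (α+1)n/(α-1)) / ( n! · Γ(α/(α+1) + n/(α-1)) · Γ(1 + n/(α-1)) ). Then the power series Σ_{n=0}^∞ a_n x^n has radius of convergence exactly c_α = (α-1)(α+1)^{α/(1-α)}. -/

import Mathlib

/-!
By log-convexity of `Γ` (Wendel's inequality), `Γ(x + c) / (Γ(x) x^c) → 1` as `x → ∞`, hence
`Γ(p(n+1) + q) / Γ(pn + q) ~ (pn)^p`. With `b = 1/(α-1)`, the coefficient `a_n` is `(α+1)^{-bn}`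
times Gamma factors of slope `2b + 1` in the numerator and `1, b, b` in the denominator, so the
powers of `n` cancel in `a_{n+1}/a_n`, which tends to `(α+1)^{-b} (2b+1)^{2b+1} / b^{2b} = 1/c_α`.
The ratio test then gives the radius of convergence.
-/

noncomputable def mgfCoef (α : ℝ) (n : ℕ) : ℝ :=
  (α+1) ^ ((n:ℝ)/(1-α)) * Real.Gamma (α/(α+1)) * Real.Gamma (1 + (α+1)*(n:ℝ)/(α-1)) /
    ((n.factorial : ℝ) * Real.Gamma (α/(α+1) + (n:ℝ)/(α-1)) * Real.Gamma (1 + (n:ℝ)/(α-1)))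

open Filter Topology Real

theorem tendsto_add_div_self_atTop (c : ℝ) : Tendsto (fun x : ℝ => (x + c) / x) atTop (𝓝 1) := by
  have h : Tendsto (fun x : ℝ => 1 + c * x⁻¹) atTop (𝓝 1) := by
    simpa using tendsto_inv_atTop_zero.const_mul c |>.const_add 1
  refine h.congr' ?_
  filter_upwards [eventually_gt_atTop 0] with x hx
  field_simp

section RatioTest

variable {𝕜 : Type*} [NormedDivisionRing 𝕜] {a : ℕ → 𝕜} {R : ℝ}

theorem tendsto_norm_mul_pow_succ_div {L : ℝ}
    (h : Tendsto (fun n => ‖a (n + 1)‖ / ‖a n‖) atTop (𝓝 L)) {x : 𝕜} (hx : x ≠ 0) :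
    Tendsto (fun n => ‖a (n + 1) * x ^ (n + 1)‖ / ‖a n * x ^ n‖) atTop (𝓝 (L * ‖x‖)) := by
  refine (h.mul_const ‖x‖).congr fun n => ?_
  have : ‖x‖ ^ n ≠ 0 := pow_ne_zero n (norm_ne_zero_iff.2 hx)
  rw [norm_mul, norm_mul, norm_pow, norm_pow, pow_succ, ← mul_assoc, mul_right_comm _ _ ‖x‖,
    mul_div_mul_right _ _ this, div_mul_eq_mul_div]

theorem summable_mul_pow_of_tendsto_norm_div [CompleteSpace 𝕜] (hR : 0 < R)
    (h : Tendsto (fun n => ‖a (n + 1)‖ / ‖a n‖) atTop (𝓝 R⁻¹)) {x : 𝕜} (hx : ‖x‖ < R) :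
    Summable fun n => a n * x ^ n := by
  rcases eq_or_ne x 0 with rfl | hx₀
  · exact summable_of_ne_finset_zero (s := {0}) fun n hn => by simp_all
  refine summable_of_ratio_test_tendsto_lt_one ?_ ?_ (tendsto_norm_mul_pow_succ_div h hx₀)
  · rwa [inv_mul_lt_one₀ hR]
  filter_upwards [h.eventually_ne (inv_pos.2 hR).ne'] with n hn
  refine mul_ne_zero (fun ha => hn ?_) (pow_ne_zero n hx₀)
  rw [ha, norm_zero, div_zero]

theorem not_summable_mul_pow_of_tendsto_norm_div (hR : 0 < R)
    (h : Tendsto (fun n => ‖a (n + 1)‖ / ‖a n‖) atTop (𝓝 R⁻¹)) {x : 𝕜} (hx : R < ‖x‖) :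
    ¬ Summable fun n => a n * x ^ n := by
  refine not_summable_of_ratio_test_tendsto_gt_one ?_
    (tendsto_norm_mul_pow_succ_div h (norm_pos_iff.1 (hR.trans hx)))
  rwa [lt_inv_mul_iff₀ hR, mul_one]

end RatioTest

namespace Real

theorem Gamma_mul_add_mul_le_rpow_Gamma_mul_rpow_Gamma_of_nonneg {s t a b : ℝ} (hs : 0 < s)
    (ht : 0 < t) (ha : 0 ≤ a) (hb : 0 ≤ b) (hab : a + b = 1) :
    Gamma (a * s + b * t) ≤ Gamma s ^ a * Gamma t ^ b := by
  have hΓs := Gamma_pos_of_pos hs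
  have hΓt := Gamma_pos_of_pos ht
  have hlog := convexOn_log_Gamma.2 (Set.mem_Ioi.2 hs) (Set.mem_Ioi.2 ht) ha hb hab
  simp only [smul_eq_mul, Function.comp_apply] at hlog
  have hst : 0 < a * s + b * t := convex_Ioi (0 : ℝ) hs ht ha hb hab
  rw [← log_le_log_iff (Gamma_pos_of_pos hst) (by positivity),
    log_mul (by positivity) (by positivity), log_rpow hΓs, log_rpow hΓt]
  exact hlog

theorem Gamma_add_le_Gamma_mul_rpow {s x : ℝ} (hs₀ : 0 ≤ s) (hs₁ : s ≤ 1) (hx : 0 < x) :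
    Gamma (x + s) ≤ Gamma x * x ^ s := by
  have h := Gamma_mul_add_mul_le_rpow_Gamma_mul_rpow_Gamma_of_nonneg hx (by linarith : 0 < x + 1)
    (sub_nonneg.2 hs₁) hs₀ (by ring)
  rwa [show (1 - s) * x + s * (x + 1) = x + s by ring, Gamma_add_one hx.ne',
    mul_rpow hx.le (Gamma_pos_of_pos hx).le, mul_left_comm, ← rpow_add (Gamma_pos_of_pos hx),
    sub_add_cancel, rpow_one, mul_comm (x ^ s)] at h

theorem mul_Gamma_le_Gamma_add_mul_rpow {s x : ℝ} (hs₀ : 0 ≤ s) (hs₁ : s ≤ 1) (hx : 0 < x) :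
    x * Gamma x ≤ Gamma (x + s) * (x + s) ^ (1 - s) := by
  have hxs : 0 < x + s := by linarith
  have h := Gamma_mul_add_mul_le_rpow_Gamma_mul_rpow_Gamma_of_nonneg hxs
    (by linarith : 0 < x + s + 1) hs₀ (sub_nonneg.2 hs₁) (by ring)
  rwa [show s * (x + s) + (1 - s) * (x + s + 1) = x + 1 by ring, Gamma_add_one hx.ne',
    Gamma_add_one hxs.ne', mul_rpow hxs.le (Gamma_pos_of_pos hxs).le, mul_left_comm,
    ← rpow_add (Gamma_pos_of_pos hxs), add_sub_cancel, rpow_one, mul_comm _ (Gamma (x + s))] at h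

theorem tendsto_Gamma_add_div_Gamma_mul_rpow_of_le_one {s : ℝ} (hs₀ : 0 ≤ s) (hs₁ : s ≤ 1) :
    Tendsto (fun x => Gamma (x + s) / (Gamma x * x ^ s)) atTop (𝓝 1) := by
  have hlow : Tendsto (fun x : ℝ => (x / (x + s)) ^ (1 - s)) atTop (𝓝 1) := by
    have h := ((tendsto_add_div_self_atTop s).inv₀ one_ne_zero).rpow_const (p := 1 - s) (by simp)
    simpa using h
  refine tendsto_of_tendsto_of_tendsto_of_le_of_le' hlow tendsto_const_nhds ?_ ?_
  all_goals filter_upwards [eventually_gt_atTop 0] with x hx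
  · have hxs : 0 < x + s := by linarith
    rw [div_rpow hx.le hxs.le, div_le_div_iff₀ (by positivity) (by positivity)]
    calc x ^ (1 - s) * (Gamma x * x ^ s) = x * Gamma x := by
          rw [mul_left_comm, ← rpow_add hx, sub_add_cancel, rpow_one, mul_comm]
      _ ≤ Gamma (x + s) * (x + s) ^ (1 - s) := mul_Gamma_le_Gamma_add_mul_rpow hs₀ hs₁ hx
  · exact div_le_one_of_le₀ (Gamma_add_le_Gamma_mul_rpow hs₀ hs₁ hx) (by positivity)

theorem tendsto_Gamma_add_div_Gamma_mul_rpow {c : ℝ} (hc : 0 ≤ c) :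
    Tendsto (fun x => Gamma (x + c) / (Gamma x * x ^ c)) atTop (𝓝 1) := by
  obtain ⟨k, hk⟩ := exists_nat_ge c
  induction k generalizing c with
  | zero => exact tendsto_Gamma_add_div_Gamma_mul_rpow_of_le_one hc (by push_cast at hk; linarith)
  | succ k ih =>
    rcases le_or_gt c 1 with hc₁ | hc₁
    · exact tendsto_Gamma_add_div_Gamma_mul_rpow_of_le_one hc hc₁
    have h := (ih (c := c - 1) (by linarith) (by push_cast at hk; linarith)).mul
      (tendsto_add_div_self_atTop (c - 1))
    rw [one_mul] at h
    refine h.congr' ?_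
    filter_upwards [eventually_gt_atTop 0] with x hx
    have hxc : 0 < x + (c - 1) := by linarith
    rw [show x + c = x + (c - 1) + 1 by ring, Gamma_add_one hxc.ne',
      show x ^ c = x ^ (c - 1) * x by rw [← rpow_add_one hx.ne', sub_add_cancel]]
    have := Gamma_pos_of_pos hx
    have := Gamma_pos_of_pos hxc
    have := rpow_pos_of_pos hx (c - 1)
    field_simp

theorem tendsto_Gamma_mul_succ_add_div_Gamma {p : ℝ} (hp : 0 < p) (q : ℝ) :
    Tendsto (fun n : ℕ => Gamma (p * (n + 1) + q) / Gamma (p * n + q) / (n : ℝ) ^ p) atTop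
      (𝓝 (p ^ p)) := by
  have hy : Tendsto (fun n : ℕ => p * n + q) atTop atTop :=
    tendsto_atTop_add_const_right _ q (tendsto_natCast_atTop_atTop.const_mul_atTop hp)
  have hy_div : Tendsto (fun n : ℕ => (p * n + q) / n) atTop (𝓝 p) := by
    have h := (tendsto_const_div_atTop_nhds_zero_nat q).const_add p
    rw [add_zero] at h
    refine h.congr' ?_
    filter_upwards [eventually_gt_atTop 0] with n hn
    field_simp
  have h := ((tendsto_Gamma_add_div_Gamma_mul_rpow hp.le).comp hy).mul
    (hy_div.rpow_const (p := p) (.inl hp.ne'))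
  rw [one_mul] at h
  refine h.congr' ?_
  filter_upwards [eventually_gt_atTop 0, hy.eventually_gt_atTop 0] with n hn hyn
  have := Gamma_pos_of_pos hyn
  have := rpow_pos_of_pos hyn p
  have : (0 : ℝ) < (n : ℝ) ^ p := rpow_pos_of_pos (by exact_mod_cast hn) p
  simp only [Function.comp_apply]
  rw [div_rpow hyn.le n.cast_nonneg, show p * (n + 1) + q = p * n + q + p by ring]
  field_simp

end Real

open Nat in
theorem mgfCoef_eq {α : ℝ} (hα : 1 < α) (n : ℕ) :
    mgfCoef α n = (α + 1) ^ (-(α - 1)⁻¹ * n) * Gamma (α / (α + 1)) *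
      Gamma ((2 * (α - 1)⁻¹ + 1) * n + 1) /
      (n ! * Gamma ((α - 1)⁻¹ * n + α / (α + 1)) * Gamma ((α - 1)⁻¹ * n + 1)) := by
  have : α - 1 ≠ 0 := by linarith
  have : 1 - α ≠ 0 := by linarith
  rw [mgfCoef, show (n : ℝ) / (1 - α) = -(α - 1)⁻¹ * n by field_simp; ring,
    show 1 + (α + 1) * (n : ℝ) / (α - 1) = (2 * (α - 1)⁻¹ + 1) * n + 1 by field_simp; ring,
    show α / (α + 1) + (n : ℝ) / (α - 1) = (α - 1)⁻¹ * n + α / (α + 1) by field_simp; ring,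
    show 1 + (n : ℝ) / (α - 1) = (α - 1)⁻¹ * n + 1 by field_simp; ring]

theorem inv_mgf_radius_eq {α : ℝ} (hα : 1 < α) :
    ((α - 1) * (α + 1) ^ (α / (1 - α)))⁻¹ =
      (α + 1) ^ (-(α - 1)⁻¹) * (2 * (α - 1)⁻¹ + 1) ^ (2 * (α - 1)⁻¹ + 1) /
        ((α - 1)⁻¹ ^ (α - 1)⁻¹ * (α - 1)⁻¹ ^ (α - 1)⁻¹) := by
  have hα₀ : α - 1 ≠ 0 := by linarith
  have hα₁ : 0 < α + 1 := by linarith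
  set b := (α - 1)⁻¹ with hb_def
  have hb : 0 < b := inv_pos.2 (sub_pos.2 hα)
  have hK₀ : 0 < 2 * b + 1 := by positivity
  have hα_eq : α - 1 = b⁻¹ := by rw [hb_def, inv_inv]
  have hexp : α / (1 - α) = -(b + 1) := by
    rw [hb_def, neg_add', div_eq_iff (by linarith)]
    field_simp
    ring
  have hK : 2 * b + 1 = (α + 1) * b := by
    rw [hb_def]
    field_simp
    ring
  have hpow : (2 * b + 1) ^ (2 * b + 1) = (2 * b + 1) ^ b * (2 * b + 1) ^ b * (2 * b + 1) := by
    rw [← rpow_add hK₀, ← rpow_add_one hK₀.ne', two_mul]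
  rw [hα_eq, hexp, hpow, hK, mul_rpow hα₁.le hb.le, rpow_neg hα₁.le, rpow_neg hα₁.le,
    rpow_add_one hα₁.ne']
  have := rpow_pos_of_pos hα₁ b
  have := rpow_pos_of_pos hb b
  field_simp

theorem tendsto_mgfCoef_succ_div_mgfCoef {α : ℝ} (hα : 1 < α) :
    Tendsto (fun n : ℕ => mgfCoef α (n + 1) / mgfCoef α n) atTop
      (𝓝 ((α - 1) * (α + 1) ^ (α / (1 - α)))⁻¹) := by
  have hα₁ : 0 < α + 1 := by linarith
  have hA : 0 < α / (α + 1) := div_pos (by linarith) hα₁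
  rw [inv_mgf_radius_eq hα]
  set b := (α - 1)⁻¹ with hb_def
  have hb : 0 < b := inv_pos.2 (sub_pos.2 hα)
  -- `n ^ (2b + 1) = n * n ^ b * n ^ b`: the powers normalising the Gamma ratios cancel
  have hlim := (((tendsto_const_nhds (x := (α + 1) ^ (-b))).mul
      (tendsto_Gamma_mul_succ_add_div_Gamma (by positivity : 0 < 2 * b + 1) 1)).mul
      (tendsto_natCast_div_add_atTop (1 : ℝ))).div
      ((tendsto_Gamma_mul_succ_add_div_Gamma hb (α / (α + 1))).mul
        (tendsto_Gamma_mul_succ_add_div_Gamma hb 1)) (by positivity)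
  rw [mul_one] at hlim
  refine hlim.congr' ?_
  filter_upwards [eventually_gt_atTop 0] with n hn
  have hn' : (0 : ℝ) < n := by exact_mod_cast hn
  rw [Pi.div_apply, mgfCoef_eq hα, mgfCoef_eq hα, ← hb_def, Nat.factorial_succ]
  push_cast
  rw [show -b * (n + 1) = -b * n + -b by ring, rpow_add hα₁,
    show 2 * b + 1 = b + b + 1 by ring, rpow_add_one hn'.ne', rpow_add hn']
  have := Gamma_pos_of_pos (show 0 < (b + b + 1) * n + 1 by positivity)
  have := Gamma_pos_of_pos (show 0 < b * n + α / (α + 1) by positivity)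
  have := Gamma_pos_of_pos (show 0 < b * n + 1 by positivity)
  have := Gamma_pos_of_pos hA
  have := rpow_pos_of_pos hn' b
  have := rpow_pos_of_pos hα₁ (-b * n)
  have := rpow_pos_of_pos hα₁ (-b)
  field_simp

theorem mgf_radius_of_convergence_general
    {α : ℝ} (hα1 : 1 < α) :
    (∀ x : ℝ, |x| < (α-1)*(α+1)^(α/(1-α)) →
      Summable (fun n : ℕ => mgfCoef α n * x^n)) ∧
    (∀ x : ℝ, (α-1)*(α+1)^(α/(1-α)) < |x| →
      ¬ Summable (fun n : ℕ => mgfCoef α n * x^n)) := by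
  have hc : 0 < (α - 1) * (α + 1) ^ (α / (1 - α)) :=
    mul_pos (by linarith) (rpow_pos_of_pos (by linarith) _)
  have hratio : Tendsto (fun n => ‖mgfCoef α (n + 1)‖ / ‖mgfCoef α n‖) atTop
      (𝓝 ((α - 1) * (α + 1) ^ (α / (1 - α)))⁻¹) := by
    simpa only [norm_div, norm_inv, Real.norm_of_nonneg hc.le] using
      (tendsto_mgfCoef_succ_div_mgfCoef hα1).norm
  exact ⟨fun x hx => summable_mul_pow_of_tendsto_norm_div hc hratio hx,
    fun x hx => not_summable_mul_pow_of_tendsto_norm_div hc hratio hx⟩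

/-- The power series `Σ a_n x^n` has radius of convergence exactly
`c_α = (α-1)(α+1)^{α/(1-α)}`. -/
theorem mgf_radius_of_convergence
    {α : ℝ} (hα1 : 1 < α) (hα2 : α < 2) :
    (∀ x : ℝ, |x| < (α-1)*(α+1)^(α/(1-α)) →
      Summable (fun n : ℕ => mgfCoef α n * x^n)) ∧
    (∀ x : ℝ, (α-1)*(α+1)^(α/(1-α)) < |x| →
      ¬ Summable (fun n : ℕ => mgfCoef α n * x^n)) :=
  mgf_radius_of_convergence_general hα1
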